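/- arXiv:1605.02776 — 5 statements merged into one kernel-verified Lean document; each statement's English description precedes it below -/
import Mathlib

section
/- The real Gamma function satisfies Γ(x)·x^{1/2−x}·e^{x} → √(2π) as x → ∞ along the reals; equivalently, the ratio Γ(x)/(√(2π)·x^{x−1/2}·e^{−x}) tends to 1 at infinity. -/
open Real Filter


lemma stepA : Tendsto (fun n : ℕ => Real.Gamma n * (n : ℝ) ^ ((1:ℝ)/2 - n) * Real.exp n)
    atTop (nhds (Real.sqrt (2 * Real.pi))) := by
  have h2 : Tendsto (fun n : ℕ => Real.sqrt 2 * Stirling.stirlingSeq n) atTop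
      (nhds (Real.sqrt (2 * Real.pi))) := by
    rw [Real.sqrt_mul (by norm_num)]
    exact Stirling.tendsto_stirlingSeq_sqrt_pi.const_mul _
  refine h2.congr' ?_
  filter_upwards [eventually_ge_atTop 1] with n hn
  obtain ⟨m, rfl⟩ := Nat.exists_eq_add_of_le hn
  have hm : ((1 + m : ℕ) : ℝ) = (m : ℝ) + 1 := by push_cast; ring
  set N : ℝ := (m : ℝ) + 1 with hNdef
  have hN : 0 < N := by positivity
  rw [Stirling.stirlingSeq, hm, Real.Gamma_nat_eq_factorial]
  have e1 : N ^ ((1:ℝ)/2 - N) = Real.sqrt N / N ^ (1 + m) := by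
    rw [Real.rpow_sub hN, ← Real.sqrt_eq_rpow]
    congr 1
    rw [← Real.rpow_natCast N (1+m)]
    congr 1
    push_cast [hNdef]; ring
  have e2 : Real.sqrt (2 * N) = Real.sqrt 2 * Real.sqrt N := Real.sqrt_mul (by norm_num) _
  have e3 : Real.exp N = Real.exp 1 ^ (1 + m) := by
    rw [← Real.exp_nat_mul, mul_one, hNdef]; push_cast; ring_nf
  have e4 : ((1 + m).factorial : ℝ) = N * (m.factorial : ℝ) := by
    rw [Nat.add_comm, Nat.factorial_succ]; push_cast [hNdef]; ring
  rw [e1, e2, e3, e4, div_pow]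
  have h1 : Real.sqrt 2 ≠ 0 := by positivity
  have h2 : Real.sqrt N ≠ 0 := by positivity
  have h3 : N ^ (1+m) ≠ 0 := by positivity
  have h4 : Real.exp 1 ^ (1+m) ≠ 0 := by positivity
  have h5 : Real.sqrt N * Real.sqrt N = N := Real.mul_self_sqrt hN.le
  field_simp
  linear_combination -h5


lemma stepB1 (n : ℕ) (hn : 1 ≤ n) (t : ℝ) (ht0 : 0 ≤ t) (ht1 : t ≤ 1) :
    Real.log (Real.Gamma ((n:ℝ) + t)) ≤ Real.log (Real.Gamma n) + t * Real.log n := by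
  have hn0 : (0:ℝ) < n := by exact_mod_cast hn
  have hc := Real.convexOn_log_Gamma
  have h := hc.2 (Set.mem_Ioi.mpr hn0) (Set.mem_Ioi.mpr (by linarith : (0:ℝ) < (n:ℝ)+1))
    (by linarith : (0:ℝ) ≤ 1 - t) ht0 (by ring)
  simp only [smul_eq_mul, Function.comp_apply] at h
  have hx : (1-t) * (n:ℝ) + t * ((n:ℝ)+1) = (n:ℝ) + t := by ring
  rw [hx] at h
  have hrec : Real.Gamma ((n:ℝ)+1) = (n:ℝ) * Real.Gamma n := Real.Gamma_add_one hn0.ne'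
  have hGpos : 0 < Real.Gamma n := Real.Gamma_pos_of_pos hn0
  rw [hrec, Real.log_mul hn0.ne' hGpos.ne'] at h
  nlinarith [h]

lemma stepB2 (n : ℕ) (hn : 2 ≤ n) (t : ℝ) (ht0 : 0 ≤ t) (ht1 : t ≤ 1) :
    Real.log (Real.Gamma n) + t * Real.log ((n:ℝ) - 1) ≤ Real.log (Real.Gamma ((n:ℝ) + t)) := by
  have hn2 : (2:ℝ) ≤ n := by exact_mod_cast hn
  have hn1 : (0:ℝ) < (n:ℝ) - 1 := by linarith
  have h1t : (0:ℝ) < 1 + t := by linarith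
  have hc := Real.convexOn_log_Gamma
  have h := hc.2 (Set.mem_Ioi.mpr hn1) (Set.mem_Ioi.mpr (by linarith : (0:ℝ) < (n:ℝ)+t))
    (div_nonneg ht0 h1t.le) (div_nonneg zero_le_one h1t.le)
    (by field_simp; ring)
  simp only [smul_eq_mul, Function.comp_apply] at h
  have hx : t/(1+t) * ((n:ℝ)-1) + 1/(1+t) * ((n:ℝ)+t) = (n:ℝ) := by field_simp; ring
  rw [hx] at h
  have hrec : Real.Gamma ((n:ℝ)) = ((n:ℝ)-1) * Real.Gamma ((n:ℝ)-1) := by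
    have := Real.Gamma_add_one hn1.ne'
    rw [sub_add_cancel] at this
    exact this
  have hGpos : 0 < Real.Gamma ((n:ℝ)-1) := Real.Gamma_pos_of_pos hn1
  set L := Real.log ((n:ℝ)-1)
  set G1 := Real.log (Real.Gamma ((n:ℝ)-1))
  set C := Real.log (Real.Gamma ((n:ℝ)+t))
  rw [hrec, Real.log_mul hn1.ne' hGpos.ne'] at h ⊢
  have h' := mul_le_mul_of_nonneg_left h h1t.le
  have e : (1+t)*(t/(1+t)*G1 + 1/(1+t)*C) = t*G1 + C := by field_simp
  rw [e] at h'
  nlinarith [h']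


lemma logfacts (N t : ℝ) (hN : 2 ≤ N) (ht0 : 0 ≤ t) (ht1 : t ≤ 1) :
    Real.log (N + t) = Real.log N + Real.log (1 + t/N) ∧
    t ≤ (N + t) * Real.log (1 + t/N) ∧
    (N + t) * Real.log (1 + t/N) ≤ t + t*t/N ∧
    0 ≤ Real.log (1 + t/N) ∧ Real.log (1 + t/N) ≤ t/N := by
  have hNpos : (0:ℝ) < N := by linarith
  have hupos : (0:ℝ) < 1 + t/N := by positivity
  have hsplit : Real.log (N + t) = Real.log N + Real.log (1 + t/N) := by
    rw [← Real.log_mul hNpos.ne' hupos.ne']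
    congr 1
    field_simp
  have hl1 : Real.log (1 + t/N) ≤ t/N := by
    have := Real.log_le_sub_one_of_pos hupos
    linarith
  have hl0 : 0 ≤ Real.log (1 + t/N) := Real.log_nonneg (by have := div_nonneg ht0 (by linarith : (0:ℝ) ≤ N); linarith)
  have hl2 : t/(N+t) ≤ Real.log (1 + t/N) := by
    have h := Real.log_le_sub_one_of_pos (show (0:ℝ) < 1/(1 + t/N) by positivity)
    rw [Real.log_div one_ne_zero hupos.ne', Real.log_one] at h
    have he : 1/(1 + t/N) - 1 = -(t/(N+t)) := by field_simp; ring
    linarith [he ▸ h]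
  refine ⟨hsplit, ?_, ?_, hl0, hl1⟩
  · have := mul_le_mul_of_nonneg_left hl2 (show (0:ℝ) ≤ N + t by linarith)
    have he : (N+t) * (t/(N+t)) = t := by field_simp
    linarith [he ▸ this]
  · have := mul_le_mul_of_nonneg_left hl1 (show (0:ℝ) ≤ N + t by linarith)
    have he : (N+t) * (t/N) = t + t*t/N := by field_simp
    linarith [he ▸ this]

lemma calcU (N t : ℝ) (hN : 2 ≤ N) (ht0 : 0 ≤ t) (ht1 : t ≤ 1) :
    t * Real.log N + (1/2 - (N+t)) * Real.log (N+t) - (1/2 - N) * Real.log N + t ≤ 1/N := by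
  have hNpos : (0:ℝ) < N := by linarith
  obtain ⟨hsplit, hk1, hk2, hl0, hl1⟩ := logfacts N t hN ht0 ht1
  rw [hsplit]
  have htN : t/N ≤ 1/N := by gcongr
  nlinarith [hl0, hk1, hl1]

lemma calcL (N t : ℝ) (hN : 2 ≤ N) (ht0 : 0 ≤ t) (ht1 : t ≤ 1) :
    -(3/N) ≤ t * Real.log (N-1) + (1/2 - (N+t)) * Real.log (N+t) - (1/2 - N) * Real.log N + t := by
  have hNpos : (0:ℝ) < N := by linarith
  have hN1 : (0:ℝ) < N - 1 := by linarith
  obtain ⟨hsplit, hk1, hk2, hl0, hl1⟩ := logfacts N t hN ht0 ht1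
  rw [hsplit]
  -- log N - log (N-1) ≤ 1/(N-1)
  have hd : Real.log N - Real.log (N-1) ≤ 1/(N-1) := by
    have h := Real.log_le_sub_one_of_pos (show (0:ℝ) < N/(N-1) by positivity)
    rw [Real.log_div hNpos.ne' hN1.ne'] at h
    have he : N/(N-1) - 1 = 1/(N-1) := by field_simp; ring
    linarith [he ▸ h]
  have hd2 : 1/(N-1) ≤ 2/N := by
    rw [div_le_div_iff₀ hN1 hNpos]; linarith
  have htt : t*t/N ≤ t/N := by gcongr ?x/N; nlinarith
  have htN : t/N ≤ 1/N := by gcongr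
  have hA : t*Real.log N - t*Real.log (N-1) ≤ 2/N := by
    have h1 := mul_le_mul_of_nonneg_left (hd.trans hd2) ht0
    have h2 : t*(2/N) ≤ 2/N := by nlinarith [show (0:ℝ) ≤ 2/N by positivity]
    nlinarith
  have h1 : (N + t) * Real.log (1 + t/N) ≤ t + 1/N := by linarith
  set l := Real.log (1 + t/N) with hldef
  set L2 := Real.log N with hL2def
  set L1 := Real.log (N-1) with hL1def
  ring_nf
  ring_nf at h1 hA hl0
  linarith [h1, hA, hl0]


noncomputable def gSt (x : ℝ) : ℝ :=
  Real.log (Real.Gamma x) + ((1:ℝ)/2 - x) * Real.log x + x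

lemma gbound (x : ℝ) (hx : 2 ≤ x) :
    gSt (⌊x⌋₊ : ℝ) - 3/(⌊x⌋₊ : ℝ) ≤ gSt x ∧ gSt x ≤ gSt (⌊x⌋₊ : ℝ) + 3/(⌊x⌋₊ : ℝ) := by
  set n := ⌊x⌋₊ with hndef
  have hx0 : (0:ℝ) ≤ x := by linarith
  have hn2 : 2 ≤ n := Nat.le_floor (by exact_mod_cast hx)
  have hnR : (2:ℝ) ≤ (n:ℝ) := by exact_mod_cast hn2
  have ht0 : 0 ≤ x - (n:ℝ) := by
    have := Nat.floor_le hx0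
    linarith
  have ht1 : x - (n:ℝ) ≤ 1 := by
    have := (Nat.lt_floor_add_one x).le
    linarith
  set t := x - (n:ℝ) with htdef
  have hxe : x = (n:ℝ) + t := by rw [htdef]; ring
  have hB1 := stepB1 n (by omega) t ht0 ht1
  have hB2 := stepB2 n hn2 t ht0 ht1
  have hU := calcU (n:ℝ) t hnR ht0 ht1
  have hL := calcL (n:ℝ) t hnR ht0 ht1
  have h3 : 1/(n:ℝ) ≤ 3/(n:ℝ) := by
    gcongr <;> norm_num
  rw [hxe]
  clear_value t
  clear_value n
  unfold gSt
  constructor <;> linarith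

lemma tendsto_gSt_nat : Tendsto (fun n : ℕ => gSt n) atTop (nhds (Real.log (Real.sqrt (2*Real.pi)))) := by
  have hpos : 0 < Real.sqrt (2 * Real.pi) := Real.sqrt_pos.mpr (by positivity)
  have h := stepA.log hpos.ne'
  refine h.congr' ?_
  filter_upwards [eventually_ge_atTop 1] with n hn
  have hn0 : (0:ℝ) < n := by exact_mod_cast hn
  have hG : 0 < Real.Gamma n := Real.Gamma_pos_of_pos hn0
  have hr : (0:ℝ) < (n:ℝ) ^ ((1:ℝ)/2 - n) := Real.rpow_pos_of_pos hn0 _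
  rw [Real.log_mul (by positivity) (Real.exp_pos _).ne', Real.log_mul hG.ne' hr.ne',
    Real.log_exp, Real.log_rpow hn0]
  rfl

lemma tendsto_gSt : Tendsto gSt atTop (nhds (Real.log (Real.sqrt (2*Real.pi)))) := by
  have hfloor : Tendsto (fun x : ℝ => ⌊x⌋₊) atTop atTop := tendsto_nat_floor_atTop
  have hz : Tendsto (fun x : ℝ => 3/(⌊x⌋₊ : ℝ)) atTop (nhds 0) := by
    have : Tendsto (fun n : ℕ => 3/(n:ℝ)) atTop (nhds 0) := by
      simpa using tendsto_const_div_atTop_nhds_zero_nat 3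
    exact this.comp hfloor
  have hg : Tendsto (fun x : ℝ => gSt (⌊x⌋₊ : ℝ)) atTop (nhds (Real.log (Real.sqrt (2*Real.pi)))) :=
    tendsto_gSt_nat.comp hfloor
  refine tendsto_of_tendsto_of_tendsto_of_le_of_le' (by simpa using hg.sub hz) (by simpa using hg.add hz) ?_ ?_
  · filter_upwards [eventually_ge_atTop (2:ℝ)] with x hx using (gbound x hx).1
  · filter_upwards [eventually_ge_atTop (2:ℝ)] with x hx using (gbound x hx).2

/-- Stirling's formula for the Gamma function: `Γ(x)·x^(1/2−x)·e^x → √(2π)` as `x → ∞`. -/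
theorem Gamma_mul_rpow_mul_exp_tendsto_sqrt_two_pi :
    Filter.Tendsto (fun x : ℝ => Real.Gamma x * x ^ ((1 : ℝ) / 2 - x) * Real.exp x)
      Filter.atTop (nhds (Real.sqrt (2 * Real.pi))) := by
  have h := (Real.continuous_exp.tendsto _).comp tendsto_gSt
  have hpos : 0 < Real.sqrt (2 * Real.pi) := Real.sqrt_pos.mpr (by positivity)
  rw [Real.exp_log hpos] at h
  refine h.congr' ?_
  filter_upwards [eventually_gt_atTop (0:ℝ)] with x hx
  have hG : 0 < Real.Gamma x := Real.Gamma_pos_of_pos hx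
  simp only [Function.comp_apply, gSt, Real.exp_add, Real.exp_log hG,
    Real.rpow_def_of_pos hx, mul_comm]
end

section
/- ψ(x) − log x → 0 as x → ∞ along the reals, where ψ(x) denotes the derivative of log Γ at x. -/
open Real Filter Set

lemma diffAt_logGamma {x : ℝ} (hx : 0 < x) :
    DifferentiableAt ℝ (fun t : ℝ => Real.log (Real.Gamma t)) x := by
  refine DifferentiableAt.log (Real.differentiableAt_Gamma fun m => ?_)
    (Real.Gamma_pos_of_pos hx).ne'
  intro h
  have : (0:ℝ) < -(m:ℝ) := h ▸ hx
  have : (0:ℝ) ≤ (m:ℝ) := Nat.cast_nonneg m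
  linarith

lemma logGamma_slope {x : ℝ} (hx : 0 < x) :
    slope (fun t : ℝ => Real.log (Real.Gamma t)) x (x + 1) = Real.log x := by
  rw [slope_def_field]
  have h1 : Real.Gamma (x + 1) = x * Real.Gamma x := Real.Gamma_add_one hx.ne'
  rw [h1, Real.log_mul hx.ne' (Real.Gamma_pos_of_pos hx).ne']
  ring

/-- `ψ(x) − log x → 0` as `x → ∞`, where `ψ` is the derivative of `log ∘ Γ`. -/
theorem digamma_sub_log_tendsto_zero :
    Filter.Tendsto
      (fun x : ℝ => deriv (fun t : ℝ => Real.log (Real.Gamma t)) x - Real.log x)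
      Filter.atTop (nhds 0) := by
  set f : ℝ → ℝ := fun t => Real.log (Real.Gamma t) with hf
  have hconv : ConvexOn ℝ (Ioi 0) f := Real.convexOn_log_Gamma
  have hlo : Tendsto (fun x : ℝ => Real.log (x - 1) - Real.log x) atTop (nhds 0) := by
    have : Tendsto (fun x : ℝ => (x - 1) / x) atTop (nhds 1) := by
      have := Filter.Tendsto.sub tendsto_const_nhds
          (tendsto_inv_atTop_zero (𝕜 := ℝ)) (f := fun _ : ℝ => (1:ℝ))
      simp only [sub_zero] at this
      refine this.congr' ?_
      filter_upwards [eventually_gt_atTop (0:ℝ)] with x hx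
      field_simp
    have hcont : Tendsto Real.log (nhds (1:ℝ)) (nhds 0) := by
      simpa using (Real.continuousAt_log one_ne_zero).tendsto
    have := hcont.comp this
    refine this.congr' ?_
    filter_upwards [eventually_gt_atTop (1:ℝ)] with x hx
    simp only [Function.comp_apply]
    rw [Real.log_div (by linarith) (by linarith)]
  refine tendsto_of_tendsto_of_tendsto_of_le_of_le' hlo tendsto_const_nhds ?_ ?_
  · -- lower bound: log(x-1) - log x ≤ ψ(x) - log x
    filter_upwards [eventually_gt_atTop (1:ℝ)] with x hx
    have hx0 : 0 < x := by linarith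
    have hx1 : 0 < x - 1 := by linarith
    have h := hconv.slope_le_deriv (mem_Ioi.mpr hx1) (mem_Ioi.mpr hx0)
      (by linarith) (diffAt_logGamma hx0)
    have hs : slope f (x - 1) ((x - 1) + 1) = Real.log (x - 1) := logGamma_slope hx1
    rw [show (x - 1) + 1 = x by ring] at hs
    rw [hs] at h
    linarith
  · -- upper bound: ψ(x) - log x ≤ 0
    filter_upwards [eventually_gt_atTop (0:ℝ)] with x hx
    have h := hconv.deriv_le_slope (mem_Ioi.mpr hx) (mem_Ioi.mpr (by linarith : (0:ℝ) < x + 1))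
      (by linarith) (diffAt_logGamma hx)
    rw [logGamma_slope hx] at h
    linarith
end

section
/- ψ(1) = −γ, where γ is the Euler–Mascheroni constant; equivalently, since Γ(1) = 1, the derivative of the real Gamma function at 1 equals −γ. -/
open Real

/-- `ψ(1) = −γ`: the digamma function at `1` is minus the Euler–Mascheroni constant;
equivalently, since `Γ(1) = 1`, the derivative of `Γ` at `1` is `−γ`. -/
theorem digamma_one_eq_neg_eulerMascheroni :
    deriv (fun t : ℝ => Real.log (Real.Gamma t)) 1 = -Real.eulerMascheroniConstant ∧
    deriv Real.Gamma 1 = -Real.eulerMascheroniConstant := by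
  have h := Real.hasDerivAt_Gamma_one
  refine ⟨?_, h.deriv⟩
  have : HasDerivAt (fun t : ℝ => Real.log (Real.Gamma t))
      (-Real.eulerMascheroniConstant / Real.Gamma 1) 1 := h.log (by simp [Real.Gamma_one])
  simpa [Real.Gamma_one] using this.deriv
end

section
/- For every real x > 0 and every natural number m ≥ 1, ((−1)^{m+1}/m!)·ψ^{(m)}(x) = Σ_{k=0}^{∞} 1/(x+k)^{m+1}, where ψ^{(m)} denotes the m-th derivative of the digamma function, i.e. the (m+1)-st derivative of log Γ; in particular the series on the right converges. -/
open Real Filter Set Topology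

/-- Elementary bound: for `0 < c ≤ 1` and `c ≤ y`, `c * (k+1) ≤ y + k`. -/
lemma polygamma_aux_bound {c : ℝ} (hc : 0 < c) (hc1 : c ≤ 1) {y : ℝ} (hy : c ≤ y) (k : ℕ) :
    c * ((k : ℝ) + 1) ≤ y + k := by
  have hk : (0 : ℝ) ≤ k := Nat.cast_nonneg k
  nlinarith

lemma polygamma_summable_sq : Summable (fun k : ℕ => 1 / ((k : ℝ) + 1) ^ 2) := by
  have := (summable_nat_add_iff (f := fun n : ℕ => 1 / (n : ℝ) ^ 2) 1).mpr
    (summable_one_div_nat_pow.mpr one_lt_two)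
  simpa using this

/-- the key pointwise bound -/
lemma polygamma_term_bound {c : ℝ} (hc : 0 < c) (hc1 : c ≤ 1) {y : ℝ} (hy : c ≤ y)
    {p : ℕ} (hp : 2 ≤ p) (k : ℕ) :
    1 / (y + k) ^ p ≤ 1 / c ^ p * (1 / ((k : ℝ) + 1) ^ 2) := by
  have hk : (0 : ℝ) ≤ k := Nat.cast_nonneg k
  have h1 : c * ((k : ℝ) + 1) ≤ y + k := polygamma_aux_bound hc hc1 hy k
  have h2 : (0 : ℝ) < c * ((k : ℝ) + 1) := by positivity
  have h3 : (c * ((k : ℝ) + 1)) ^ p ≤ (y + k) ^ p := pow_le_pow_left₀ h2.le h1 p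
  have h4 : c ^ p * ((k : ℝ) + 1) ^ 2 ≤ (c * ((k : ℝ) + 1)) ^ p := by
    rw [mul_pow]
    have h5 : ((k : ℝ) + 1) ^ 2 ≤ ((k : ℝ) + 1) ^ p :=
      pow_le_pow_right₀ (by linarith) hp
    have := pow_pos hc p
    nlinarith
  have h6 : (0 : ℝ) < c ^ p * ((k : ℝ) + 1) ^ 2 := by positivity
  calc 1 / (y + k) ^ p ≤ 1 / (c ^ p * ((k : ℝ) + 1) ^ 2) :=
        one_div_le_one_div_of_le h6 (h4.trans h3)
  _ = 1 / c ^ p * (1 / ((k : ℝ) + 1) ^ 2) := by rw [one_div_mul_one_div]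

lemma polygamma_summable {x : ℝ} (hx : 0 < x) {p : ℕ} (hp : 2 ≤ p) :
    Summable fun k : ℕ => 1 / (x + k) ^ p := by
  have hc : 0 < min x 1 := lt_min hx one_pos
  refine Summable.of_nonneg_of_le (fun k => by positivity)
    (fun k => polygamma_term_bound hc (min_le_right x 1) (min_le_left x 1) hp k)
    (polygamma_summable_sq.mul_left _)

noncomputable def psiAux (y : ℝ) : ℝ :=
  -Real.eulerMascheroniConstant + ∑' k : ℕ, (((k : ℝ) + 1)⁻¹ - (y + k)⁻¹)

lemma polygamma_h_bound {x : ℝ} (hx : 0 < x) {y : ℝ} (hy1 : x / 2 < y) (hy2 : y < x + 1)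
    (k : ℕ) :
    ‖((k : ℝ) + 1)⁻¹ - (y + k)⁻¹‖ ≤ (x + 2) / min (x / 2) 1 * (1 / ((k : ℝ) + 1) ^ 2) := by
  set c := min (x / 2) 1 with hcdef
  have hc : 0 < c := lt_min (by linarith) one_pos
  have hc1 : c ≤ 1 := min_le_right _ _
  have hk : (0 : ℝ) ≤ k := Nat.cast_nonneg k
  have hyk : 0 < y + k := by have : c ≤ y := (min_le_left _ _).trans hy1.le; linarith
  have hk1 : (0 : ℝ) < (k : ℝ) + 1 := by linarith
  have e : ((k : ℝ) + 1)⁻¹ - (y + k)⁻¹ = (y - 1) / (((k : ℝ) + 1) * (y + k)) := by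
    field_simp
    ring
  have hnum : |y - 1| ≤ x + 2 := abs_le.2 ⟨by linarith, by linarith⟩
  have hden : c * ((k : ℝ) + 1) ^ 2 ≤ ((k : ℝ) + 1) * (y + k) := by
    have h1 : c * ((k : ℝ) + 1) ≤ y + k :=
      polygamma_aux_bound hc hc1 ((min_le_left _ _).trans hy1.le) k
    nlinarith
  have hdenpos : 0 < c * ((k : ℝ) + 1) ^ 2 := by positivity
  rw [e, Real.norm_eq_abs, abs_div, abs_of_pos (by positivity : (0:ℝ) < ((k:ℝ)+1)*(y+k))]
  calc |y - 1| / (((k : ℝ) + 1) * (y + k)) ≤ (x + 2) / (c * ((k : ℝ) + 1) ^ 2) :=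
        div_le_div₀ (by linarith) hnum hdenpos hden
  _ = (x + 2) / c * (1 / ((k : ℝ) + 1) ^ 2) := by
        field_simp

lemma hasDerivAt_logGamma {x : ℝ} (hx : 0 < x) :
    HasDerivAt (fun t : ℝ => Real.log (Real.Gamma t)) (psiAux x) x := by
  set s : Set ℝ := Ioo (x / 2) (x + 1) with hsdef
  have hxs : x ∈ s := ⟨by linarith, by linarith⟩
  -- uniform convergence of the derivatives
  have hB : TendstoUniformlyOn
      (fun (N : ℕ) (y : ℝ) => ∑ k ∈ Finset.range N, (((k : ℝ) + 1)⁻¹ - (y + k)⁻¹))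
      (fun y => ∑' k : ℕ, (((k : ℝ) + 1)⁻¹ - (y + k)⁻¹)) atTop s := by
    apply tendstoUniformlyOn_tsum_nat
      (u := fun k : ℕ => (x + 2) / min (x / 2) 1 * (1 / ((k : ℝ) + 1) ^ 2))
      (polygamma_summable_sq.mul_left _)
    intro k y hy
    exact polygamma_h_bound hx hy.1 hy.2 k
  have hB' : TendstoUniformlyOn
      (fun (n : ℕ) (y : ℝ) => ∑ k ∈ Finset.range (n + 1), (((k : ℝ) + 1)⁻¹ - (y + k)⁻¹))
      (fun y => ∑' k : ℕ, (((k : ℝ) + 1)⁻¹ - (y + k)⁻¹)) atTop s :=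
    fun v hv => (tendsto_add_atTop_nat 1).eventually (hB v hv)
  have hA : Tendsto (fun n : ℕ => Real.log n - (harmonic (n + 1) : ℝ)) atTop
      (𝓝 (-Real.eulerMascheroniConstant)) := by
    have h1 : Tendsto (fun n : ℕ => (harmonic (n + 1) : ℝ) - Real.log ((n : ℝ) + 1)) atTop
        (𝓝 Real.eulerMascheroniConstant) := by
      have h := Real.tendsto_harmonic_sub_log.comp (tendsto_add_atTop_nat 1)
      refine h.congr fun n => ?_
      simp only [Function.comp_apply, Nat.cast_add, Nat.cast_one]
    have h2 : Tendsto (fun n : ℕ => Real.log ((n : ℝ) + 1) - Real.log n) atTop (𝓝 0) :=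
      Real.tendsto_log_nat_add_one_sub_log
    have h3 := (h1.add h2).neg
    simp only [neg_add, add_zero] at h3 ⊢
    convert h3 using 2 with n
    ring
  have huconv : TendstoUniformlyOn
      (fun (n : ℕ) (y : ℝ) => Real.log n - ∑ m ∈ Finset.range (n + 1), (y + (m : ℝ))⁻¹)
      psiAux atTop s := by
    have := (hA.tendstoUniformlyOn_const s).add hB'
    apply this.congr
    filter_upwards with n
    intro y hy
    have hharm : (harmonic (n + 1) : ℝ) = ∑ k ∈ Finset.range (n + 1), ((k : ℝ) + 1)⁻¹ := by
      rw [harmonic]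
      push_cast
      rfl
    simp only [Pi.add_apply, hharm, Finset.sum_sub_distrib]
    ring
  refine hasDerivAt_of_tendstoUniformlyOn
    (f := fun (n : ℕ) (z : ℝ) => Real.BohrMollerup.logGammaSeq z n)
    isOpen_Ioo huconv ?_ ?_ hxs
  · filter_upwards with n
    intro y hy
    have hy0 : 0 < y := lt_trans (by linarith) hy.1
    have hd : HasDerivAt (fun z : ℝ => Real.BohrMollerup.logGammaSeq z n)
        (Real.log n - ∑ m ∈ Finset.range (n + 1), (y + (m : ℝ))⁻¹) y := by
      unfold Real.BohrMollerup.logGammaSeq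
      have hsum : HasDerivAt (fun z : ℝ => ∑ m ∈ Finset.range (n + 1), Real.log (z + (m : ℝ)))
          (∑ m ∈ Finset.range (n + 1), (y + (m : ℝ))⁻¹) y := by
        apply HasDerivAt.fun_sum
        intro m hm
        have hym : y + (m : ℝ) ≠ 0 := by positivity
        have := (((hasDerivAt_id y).add_const (m : ℝ)).log hym)
        simpa [one_div] using this
      exact ((hasDerivAt_mul_const (Real.log n)).add_const (Real.log (Nat.factorial n))).sub hsum
    exact hd
  · intro y hy
    exact Real.BohrMollerup.tendsto_log_gamma (lt_trans (by linarith) hy.1)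

lemma polygamma_hasDerivAt_psi {x : ℝ} (hx : 0 < x) :
    HasDerivAt psiAux (∑' k : ℕ, 1 / (x + (k : ℝ)) ^ 2) x := by
  set c := min (x / 2) 1 with hcdef
  have hc : 0 < c := lt_min (by linarith) one_pos
  have hc1 : c ≤ 1 := min_le_right _ _
  apply HasDerivAt.const_add
  refine hasDerivAt_tsum_of_isPreconnected
    (u := fun k : ℕ => 1 / c ^ 2 * (1 / ((k : ℝ) + 1) ^ 2))
    (g := fun (k : ℕ) (y : ℝ) => ((k : ℝ) + 1)⁻¹ - (y + (k : ℝ))⁻¹)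
    (g' := fun (k : ℕ) (y : ℝ) => 1 / (y + (k : ℝ)) ^ 2)
    (t := Ioo (x / 2) (x + 1)) (y₀ := x)
    (polygamma_summable_sq.mul_left _) isOpen_Ioo isPreconnected_Ioo ?_ ?_
    ⟨by linarith, by linarith⟩ ?_ ⟨by linarith, by linarith⟩
  · intro k y hy
    have hyk : (0 : ℝ) < y + k := by
      have : (0 : ℝ) ≤ k := Nat.cast_nonneg k
      have := hy.1; nlinarith
    have := (((hasDerivAt_id y).add_const (k : ℝ)).inv hyk.ne').const_sub ((k : ℝ) + 1)⁻¹
    convert this using 1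
    · rfl
    · simp [id, neg_div]
  · intro k y hy
    have hcy : c ≤ y := (min_le_left _ _).trans hy.1.le
    have hyk : (0 : ℝ) < y + k := by
      have : (0 : ℝ) ≤ k := Nat.cast_nonneg k; linarith [lt_of_lt_of_le hc hcy]
    rw [Real.norm_eq_abs, abs_of_nonneg (by positivity)]
    exact polygamma_term_bound hc hc1 hcy le_rfl k
  · apply Summable.of_norm_bounded (polygamma_summable_sq.mul_left ((x + 2) / c))
    intro k
    exact polygamma_h_bound hx (by linarith) (by linarith) k

lemma polygamma_hasDerivAt_S {x : ℝ} (hx : 0 < x) {p : ℕ} (hp : 2 ≤ p) :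
    HasDerivAt (fun y : ℝ => ∑' k : ℕ, 1 / (y + (k : ℝ)) ^ p)
      (-(p : ℝ) * ∑' k : ℕ, 1 / (x + (k : ℝ)) ^ (p + 1)) x := by
  set c := min (x / 2) 1 with hcdef
  have hc : 0 < c := lt_min (by linarith) one_pos
  have hc1 : c ≤ 1 := min_le_right _ _
  have key := hasDerivAt_tsum_of_isPreconnected
    (u := fun k : ℕ => (p : ℝ) / c ^ (p + 1) * (1 / ((k : ℝ) + 1) ^ 2))
    (g := fun (k : ℕ) (y : ℝ) => 1 / (y + (k : ℝ)) ^ p)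
    (g' := fun (k : ℕ) (y : ℝ) => -(p : ℝ) * (1 / (y + (k : ℝ)) ^ (p + 1)))
    (t := Ioi (x / 2)) (y₀ := x)
    (polygamma_summable_sq.mul_left _) isOpen_Ioi isPreconnected_Ioi ?_ ?_
    (show x ∈ Ioi (x/2) from mem_Ioi.2 (by linarith)) (polygamma_summable hx hp)
    (show x ∈ Ioi (x/2) from mem_Ioi.2 (by linarith))
  · have hts : (∑' k : ℕ, (-(p : ℝ) * (1 / (x + (k : ℝ)) ^ (p + 1))))
        = -(p : ℝ) * ∑' k : ℕ, 1 / (x + (k : ℝ)) ^ (p + 1) := tsum_mul_left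
    rw [← hts]
    exact key
  · intro k y hy
    have hcy : c ≤ y := (min_le_left _ _).trans (le_of_lt hy)
    have hyk : (0 : ℝ) < y + k := by
      have : (0 : ℝ) ≤ k := Nat.cast_nonneg k; linarith [lt_of_lt_of_le hc hcy]
    have h0 : HasDerivAt (fun z : ℝ => ((z + (k : ℝ)) ^ p)⁻¹)
        (-((p : ℝ) * (y + (k : ℝ)) ^ (p - 1) * 1) / ((y + (k : ℝ)) ^ p) ^ 2) y :=
      (((hasDerivAt_id y).add_const (k : ℝ)).pow p).inv (pow_pos hyk p).ne'
    have heq : -((p : ℝ) * (y + (k : ℝ)) ^ (p - 1) * 1) / ((y + (k : ℝ)) ^ p) ^ 2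
        = -(p : ℝ) * (1 / (y + (k : ℝ)) ^ (p + 1)) := by
      have h2p : p * 2 = (p - 1) + (p + 1) := by omega
      rw [mul_one, ← pow_mul, h2p, pow_add]
      rw [div_eq_iff (by positivity), neg_mul, neg_mul, neg_inj, mul_assoc]
      congr 1
      rw [one_div, mul_comm (((y + (k:ℝ)) ^ (p+1))⁻¹), mul_assoc,
        mul_inv_cancel₀ (by positivity : (0:ℝ) < (y + (k:ℝ)) ^ (p+1)).ne', mul_one]
    rw [heq] at h0
    simpa [one_div] using h0
  · intro k y hy
    have hcy : c ≤ y := (min_le_left _ _).trans (le_of_lt hy)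
    have hyk : (0 : ℝ) < y + k := by
      have : (0 : ℝ) ≤ k := Nat.cast_nonneg k; linarith [lt_of_lt_of_le hc hcy]
    rw [Real.norm_eq_abs, abs_mul, abs_neg, Nat.abs_cast, abs_of_nonneg (by positivity)]
    calc (p : ℝ) * (1 / (y + (k : ℝ)) ^ (p + 1))
        ≤ (p : ℝ) * (1 / c ^ (p + 1) * (1 / ((k : ℝ) + 1) ^ 2)) :=
          mul_le_mul_of_nonneg_left
            (polygamma_term_bound hc hc1 hcy (by omega) k) (Nat.cast_nonneg p)
      _ = (p : ℝ) / c ^ (p + 1) * (1 / ((k : ℝ) + 1) ^ 2) := by ring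

lemma polygamma_claim (n : ℕ) : ∀ x : ℝ, 0 < x →
    iteratedDeriv (n + 2) (fun t : ℝ => Real.log (Real.Gamma t)) x
      = (-1) ^ n * (Nat.factorial (n + 1) : ℝ) * ∑' k : ℕ, 1 / (x + (k : ℝ)) ^ (n + 2) := by
  induction n with
  | zero =>
    intro x hx
    show iteratedDeriv (1 + 1) _ x = _
    rw [iteratedDeriv_succ, iteratedDeriv_one]
    have h1 : deriv (fun t : ℝ => Real.log (Real.Gamma t)) =ᶠ[𝓝 x] psiAux :=
      eventually_of_mem (Ioi_mem_nhds hx) fun y hy => (hasDerivAt_logGamma hy).deriv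
    rw [h1.deriv_eq, (polygamma_hasDerivAt_psi hx).deriv]
    norm_num
  | succ n ih =>
    intro x hx
    show iteratedDeriv ((n + 2) + 1) _ x = _
    rw [iteratedDeriv_succ]
    have h1 : deriv (iteratedDeriv (n + 2) (fun t : ℝ => Real.log (Real.Gamma t))) x
        = deriv (fun y : ℝ => (-1) ^ n * (Nat.factorial (n + 1) : ℝ)
            * ∑' k : ℕ, 1 / (y + (k : ℝ)) ^ (n + 2)) x := by
      apply Filter.EventuallyEq.deriv_eq
      exact eventually_of_mem (Ioi_mem_nhds hx) fun y hy => ih y hy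
    rw [h1, (HasDerivAt.const_mul _ (polygamma_hasDerivAt_S hx (by omega : 2 ≤ n + 2))).deriv]
    push_cast [Nat.factorial_succ]
    ring

/-- Series representation of the polygamma functions: for `x > 0` and `m ≥ 1`,
`((−1)^(m+1)/m!)·ψ^(m)(x) = Σ_{k≥0} 1/(x+k)^(m+1)`, where `ψ^(m)` is the
`(m+1)`-st derivative of `log ∘ Γ`; in particular the series converges. -/
theorem polygamma_hasSum (x : ℝ) (hx : 0 < x) (m : ℕ) (hm : 1 ≤ m) :
    HasSum (fun k : ℕ => 1 / (x + k) ^ (m + 1))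
      ((-1) ^ (m + 1) / (Nat.factorial m : ℝ)
        * iteratedDeriv (m + 1) (fun t : ℝ => Real.log (Real.Gamma t)) x) := by
  obtain ⟨n, rfl⟩ : ∃ n, m = n + 1 := ⟨m - 1, by omega⟩
  have hfac : (Nat.factorial (n + 1) : ℝ) ≠ 0 := Nat.cast_ne_zero.2 (Nat.factorial_ne_zero _)
  have hpow : ((-1 : ℝ)) ^ (n + 1 + 1) * (-1) ^ n = 1 := by
    rw [← pow_add]; exact Even.neg_one_pow ⟨n + 1, by ring⟩
  have hgoal : (-1 : ℝ) ^ (n + 1 + 1) / (Nat.factorial (n + 1) : ℝ)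
      * iteratedDeriv (n + 1 + 1) (fun t : ℝ => Real.log (Real.Gamma t)) x
      = ∑' k : ℕ, 1 / (x + (k : ℝ)) ^ (n + 1 + 1) := by
    rw [show n + 1 + 1 = n + 2 from rfl, polygamma_claim n x hx]
    set S := ∑' k : ℕ, 1 / (x + (k : ℝ)) ^ (n + 2)
    calc (-1 : ℝ) ^ (n + 2) / (Nat.factorial (n + 1) : ℝ)
          * ((-1) ^ n * (Nat.factorial (n + 1) : ℝ) * S)
        = (-1 : ℝ) ^ (n + 2) * (-1) ^ n * S
            * ((Nat.factorial (n + 1) : ℝ) / (Nat.factorial (n + 1) : ℝ)) := by ring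
      _ = S := by rw [div_self hfac, hpow, one_mul, mul_one]
  rw [hgoal]
  exact (polygamma_summable hx (by omega : 2 ≤ n + 1 + 1)).hasSum
end

section
/- Chebyshev's extremal property on [0,1]: for every monic real polynomial p of degree n ≥ 1 there exists x ∈ [0,1] with |p(x)| ≥ 2^{1−2n}; that is, among all monic polynomials of degree n, the normalized shifted Chebyshev polynomial 2^{1−2n}·T*_n (whose leading coefficient, 2^{2n−1}, is used for normalization) has the smallest maximal deviation from zero on [0,1]. -/
open Real Polynomial

lemma chebT_natDegree_le (n : ℕ) : (Polynomial.Chebyshev.T ℝ (n : ℤ)).natDegree ≤ n := by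
  induction n using Nat.strong_induction_on with
  | _ n ih =>
    match n with
    | 0 => simp [Polynomial.Chebyshev.T_zero]
    | 1 => simp [Polynomial.Chebyshev.T_one]
    | (m+2) =>
      have h := Polynomial.Chebyshev.T_add_two ℝ (m : ℤ)
      have h1 := ih (m+1) (by omega)
      have h2 := ih m (by omega)
      have : ((m:ℤ) + 2) = ((m+2 : ℕ) : ℤ) := by push_cast; ring
      rw [this] at h
      rw [h]
      refine le_trans (Polynomial.natDegree_sub_le _ _) ?_
      have hmul : (2 * X * Polynomial.Chebyshev.T ℝ ((m:ℤ)+1)).natDegree ≤ m + 2 := by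
        refine le_trans (Polynomial.natDegree_mul_le) ?_
        have : ((m:ℤ)+1) = ((m+1:ℕ):ℤ) := by push_cast; ring
        rw [this]
        have : (2 * X : ℝ[X]).natDegree ≤ 1 := by
          refine le_trans (Polynomial.natDegree_mul_le) ?_
          simp
        omega
      have : ((m:ℤ)+1) = ((m+1:ℕ):ℤ) := by push_cast; ring
      simp only [max_le_iff]
      exact ⟨hmul, by omega⟩

lemma chebT_coeff (n : ℕ) : (Polynomial.Chebyshev.T ℝ ((n : ℤ)+1)).coeff (n+1) = 2 ^ n := by
  induction n with
  | zero => simp [Polynomial.Chebyshev.T_one]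
  | succ m ih =>
    have h := Polynomial.Chebyshev.T_add_two ℝ (m : ℤ)
    have : ((m:ℤ) + 2) = (((m+1:ℕ)) : ℤ) + 1 := by push_cast; ring
    rw [this] at h
    rw [h, Polynomial.coeff_sub]
    have hlow : (Polynomial.Chebyshev.T ℝ (m:ℤ)).coeff (m+1+1) = 0 := by
      apply Polynomial.coeff_eq_zero_of_natDegree_lt
      exact lt_of_le_of_lt (chebT_natDegree_le m) (by omega)
    have hX : (2 * X * Polynomial.Chebyshev.T ℝ ((m:ℤ)+1)).coeff (m+1+1) = 2 ^ (m+1) := by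
      have : (2 * X * Polynomial.Chebyshev.T ℝ ((m:ℤ)+1)) =
          Polynomial.C 2 * (X * Polynomial.Chebyshev.T ℝ ((m:ℤ)+1)) := by
        have h2 : (2 : ℝ[X]) = Polynomial.C 2 := (map_ofNat Polynomial.C 2).symm
        rw [mul_assoc, h2]
      rw [this, Polynomial.coeff_C_mul, Polynomial.coeff_X_mul, ih]
      ring
    rw [hX, hlow]; ring

lemma chebT_natDegree (n : ℕ) (hn : 1 ≤ n) : (Polynomial.Chebyshev.T ℝ (n : ℤ)).natDegree = n := by
  obtain ⟨m, rfl⟩ := Nat.exists_eq_add_of_le hn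
  refine le_antisymm (chebT_natDegree_le _) ?_
  apply Polynomial.le_natDegree_of_ne_zero
  have := chebT_coeff m
  have he : ((1 + m : ℕ) : ℤ) = (m : ℤ) + 1 := by push_cast; ring
  rw [he]
  rw [show 1 + m = m + 1 by omega, this]
  positivity

lemma chebT_leadingCoeff (n : ℕ) (hn : 1 ≤ n) :
    (Polynomial.Chebyshev.T ℝ (n : ℤ)).leadingCoeff = 2 ^ (n - 1) := by
  obtain ⟨m, rfl⟩ := Nat.exists_eq_add_of_le hn
  rw [Polynomial.leadingCoeff, chebT_natDegree _ (by omega)]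
  have he : ((1 + m : ℕ) : ℤ) = (m : ℤ) + 1 := by push_cast; ring
  rw [show 1 + m = m + 1 by omega] at he ⊢
  rw [he, chebT_coeff m]
  simp

/-- Chebyshev's extremal property on `[0,1]`: every monic real polynomial of degree
`n ≥ 1` has absolute value at least `2^(1−2n)` somewhere on `[0,1]`. -/
theorem monic_poly_exists_ge_on_unit_interval (n : ℕ) (hn : 1 ≤ n)
    (p : Polynomial ℝ) (hp : p.Monic) (hdeg : p.natDegree = n) :
    ∃ x ∈ Set.Icc (0 : ℝ) 1, (2 : ℝ) ^ (1 - 2 * (n : ℤ)) ≤ |p.eval x| := by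
  by_contra hcon
  push_neg at hcon
  -- rewrite the bound
  have hzpow : (2 : ℝ) ^ (1 - 2 * (n : ℤ)) = ((2 : ℝ) ^ (2*n - 1))⁻¹ := by
    rw [show (1 - 2 * (n:ℤ)) = -((2*n-1 : ℕ) : ℤ) by push_cast; omega]
    rw [zpow_neg, zpow_natCast]
  set c : ℝ := 2 ^ (2*n - 1) with hc
  have hcpos : (0:ℝ) < c := by positivity
  have hsmall : ∀ x ∈ Set.Icc (0:ℝ) 1, |c * p.eval x| < 1 := by
    intro x hx
    have := hcon x hx
    rw [hzpow] at this
    rw [abs_mul, abs_of_pos hcpos]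
    calc c * |p.eval x| < c * c⁻¹ := by exact mul_lt_mul_of_pos_left this hcpos
    _ = 1 := by field_simp
  -- the scaled shifted Chebyshev polynomial
  set L : ℝ[X] := 2 * X - 1 with hL
  set Cp : ℝ[X] := (Polynomial.Chebyshev.T ℝ (n : ℤ)).comp L with hCp
  have hLdeg : L.natDegree = 1 := by
    rw [hL]
    compute_degree!
  have hLlead : L.leadingCoeff = 2 := by
    rw [Polynomial.leadingCoeff, hLdeg, hL]
    simp [Polynomial.coeff_sub, Polynomial.coeff_one]
  have hCpdeg : Cp.natDegree = n := by
    rw [hCp, Polynomial.natDegree_comp, hLdeg, chebT_natDegree n hn, mul_one]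
  have hCplead : Cp.leadingCoeff = c := by
    rw [hCp, Polynomial.leadingCoeff_comp (by rw [hLdeg]; omega), hLlead,
      chebT_leadingCoeff n hn, chebT_natDegree n hn, hc, ← pow_add]
    congr 1
    omega
  -- evaluation of Cp at the alternation points
  set xp : ℕ → ℝ := fun k => (1 + Real.cos (k * π / n)) / 2 with hxp
  have hnR : (0:ℝ) < n := by positivity
  have hxmem : ∀ k : ℕ, xp k ∈ Set.Icc (0:ℝ) 1 := by
    intro k
    have h1 := Real.neg_one_le_cos (k * π / n)
    have h2 := Real.cos_le_one (k * π / n)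
    constructor <;> simp only [hxp] <;> nlinarith
  have hCpval : ∀ k : ℕ, k ≤ n → Cp.eval (xp k) = (-1) ^ k := by
    intro k hk
    have harg : 2 * xp k - 1 = Real.cos (k * π / n) := by
      simp only [hxp]; ring
    rw [hCp, Polynomial.eval_comp]
    have hLeval : L.eval (xp k) = Real.cos (k * π / n) := by
      simp [hL, Polynomial.eval_sub, Polynomial.eval_mul]
      linarith [harg]
    rw [hLeval, Polynomial.Chebyshev.T_real_cos]
    have hne : (n:ℝ) ≠ 0 := hnR.ne'
    have hcast : (((n:ℤ)):ℝ) * ((k:ℝ) * π / n) = k * π := by push_cast; field_simp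
    rw [hcast]
    have := Real.cos_nat_mul_pi_sub 0 k
    simpa using this
  -- monotonicity of the points
  have hxanti : ∀ i j : ℕ, i < j → j ≤ n → xp j < xp i := by
    intro i j hij hj
    have hmono : Real.cos (j * π / n) < Real.cos (i * π / n) := by
      apply Real.strictAntiOn_cos
      · constructor
        · positivity
        · rw [div_le_iff₀ hnR]
          have : (i:ℝ) ≤ n := by exact_mod_cast le_trans (le_of_lt hij) hj
          nlinarith [Real.pi_pos]
      · constructor
        · positivity
        · rw [div_le_iff₀ hnR]
          have : (j:ℝ) ≤ n := by exact_mod_cast hj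
          nlinarith [Real.pi_pos]
      · have : (i:ℝ) < j := by exact_mod_cast hij
        have hπ := Real.pi_pos
        gcongr
    simp only [hxp]
    linarith
  -- the difference polynomial
  set q : ℝ[X] := Polynomial.C c * p - Cp with hq
  have hpne : Polynomial.C c * p ≠ 0 := by
    apply mul_ne_zero
    · simpa using ne_of_gt hcpos
    · exact hp.ne_zero
  have hdegCb : (Polynomial.C c * p).degree = Cp.degree := by
    rw [Polynomial.degree_C_mul (ne_of_gt hcpos)]
    rw [Polynomial.degree_eq_natDegree hp.ne_zero,
      Polynomial.degree_eq_natDegree (fun h => by simp [h] at hCpdeg; omega), hdeg, hCpdeg]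
  have hleadeq : (Polynomial.C c * p).leadingCoeff = Cp.leadingCoeff := by
    rw [Polynomial.leadingCoeff_mul, Polynomial.leadingCoeff_C, hp.leadingCoeff, mul_one, hCplead]
  have hqdeg : q.degree < n := by
    have := Polynomial.degree_sub_lt hdegCb hpne hleadeq
    rw [Polynomial.degree_C_mul (ne_of_gt hcpos), Polynomial.degree_eq_natDegree hp.ne_zero,
      hdeg] at this
    exact_mod_cast this
  have hqnatdeg : q.natDegree < n := by
    by_cases h0 : q = 0
    · rw [h0]; simpa using (show 0 < n by omega)
    · exact (Polynomial.natDegree_lt_iff_degree_lt h0).2 (by exact_mod_cast hqdeg)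
  -- sign of q at the points
  have hqsign : ∀ k : ℕ, k ≤ n → (Even k → q.eval (xp k) < 0) ∧ (Odd k → 0 < q.eval (xp k)) := by
    intro k hk
    have hev : q.eval (xp k) = c * p.eval (xp k) - (-1)^k := by
      simp [hq, hCpval k hk]
    have hb := hsmall (xp k) (hxmem k)
    rw [abs_lt] at hb
    constructor
    · intro hkev
      rw [hev, hkev.neg_one_pow]
      linarith [hb.2]
    · intro hkodd
      rw [hev, hkodd.neg_one_pow]
      linarith [hb.1]
  -- roots via IVT
  have hroots : ∀ k : ℕ, k < n → ∃ r ∈ Set.Ioo (xp (k+1)) (xp k), q.eval r = 0 := by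
    intro k hk
    have hlt : xp (k+1) < xp k := hxanti k (k+1) (by omega) (by omega)
    have hcont : ContinuousOn (fun x => q.eval x) (Set.Icc (xp (k+1)) (xp k)) :=
      (Polynomial.continuous q).continuousOn
    have hk1 := hqsign k (by omega)
    have hk2 := hqsign (k+1) (by omega)
    rcases Nat.even_or_odd k with hke | hko
    · -- q(xp k) < 0 < q(xp (k+1))
      have h1 : q.eval (xp k) < 0 := hk1.1 hke
      have h2 : 0 < q.eval (xp (k+1)) := hk2.2 (by simpa using hke.add_one)
      have := intermediate_value_Ioo' (le_of_lt hlt) hcont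
      have hmem : (0:ℝ) ∈ Set.Ioo (q.eval (xp k)) (q.eval (xp (k+1))) := ⟨h1, h2⟩
      obtain ⟨r, hr, hr0⟩ := this hmem
      exact ⟨r, hr, hr0⟩
    · have h1 : 0 < q.eval (xp k) := hk1.2 hko
      have h2 : q.eval (xp (k+1)) < 0 := hk2.1 (by simpa using hko.add_one)
      have := intermediate_value_Ioo (le_of_lt hlt) hcont
      have hmem : (0:ℝ) ∈ Set.Ioo (q.eval (xp (k+1))) (q.eval (xp k)) := ⟨h2, h1⟩
      obtain ⟨r, hr, hr0⟩ := this hmem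
      exact ⟨r, hr, hr0⟩
  -- choose roots
  have hchoice : ∀ k : Fin n, ∃ r, r ∈ Set.Ioo (xp (k+1)) (xp k) ∧ q.eval r = 0 := by
    intro k
    obtain ⟨r, hr, h0⟩ := hroots k k.2
    exact ⟨r, hr, h0⟩
  choose r hrmem hrzero using hchoice
  have hrinj : Function.Injective r := by
    have hkey : ∀ i j : Fin n, (i:ℕ) < (j:ℕ) → r j < r i := by
      intro i j hij
      have h1 : r j < xp j := (hrmem j).2
      have h2 : xp (i+1) < r i := (hrmem i).1
      have h3 : xp (j:ℕ) ≤ xp (i+1) := by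
        rcases eq_or_lt_of_le (show (i:ℕ)+1 ≤ (j:ℕ) by omega) with h | h
        · rw [h]
        · exact le_of_lt (hxanti _ _ h j.2.le)
      linarith
    intro i j hij
    rcases lt_trichotomy (i:ℕ) (j:ℕ) with h | h | h
    · exact absurd hij (ne_of_gt (hkey i j h))
    · exact Fin.ext h
    · exact absurd hij (ne_of_lt (hkey j i h))
  have hq0 : q = 0 := by
    apply Polynomial.eq_zero_of_natDegree_lt_card_of_eval_eq_zero q hrinj hrzero
    simpa using hqnatdeg
  have := (hqsign 0 (by omega)).1 (by simp)
  rw [hq0] at this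
  simp at this
end
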